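/- arXiv:0708.2752 — 5 statements merged into one kernel-verified Lean document; each statement's English description precedes it below -/
import Mathlib

section
/- The intersection points of the Selmer curve 3x³+4y³+5z³=0 with the line 711x+172y+785z=0 are defined over a cubic Galois extension of ℚ; concretely, the cubic polynomial obtained by substituting the line into the curve equation has Galois group ℤ/3ℤ over ℚ. -/
open Polynomial

private theorem no_quad {K : Type*} [Field K] [Algebra ℚ K] {α : K}
    (h3 : (minpoly ℚ α).natDegree = 3) {a b c : ℚ} (hc : c ≠ 0)
    (h : aeval α (C c * X ^ 2 + C b * X + C a) = 0) : False := by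
  have hp0 : (C c * X ^ 2 + C b * X + C a : ℚ[X]) ≠ 0 := by
    intro h0
    apply hc
    have := congrArg (fun p => Polynomial.coeff p 2) h0
    simpa [coeff_C] using this
  have hle := minpoly.degree_le_of_ne_zero ℚ α hp0 h
  have h2 : (C c * X ^ 2 + C b * X + C a : ℚ[X]).degree ≤ 2 := by compute_degree
  have h4 : (minpoly ℚ α).natDegree ≤ 2 := natDegree_le_iff_degree_le.mpr (le_trans hle h2)
  omega

set_option maxHeartbeats 4000000 in
/-- Substituting the line `711x + 172y + 785z = 0` (i.e. `y = -(711x + 785z)/172`,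
in the affine chart `z = 1` with `x = T`, cleared of denominators) into the Selmer
cubic `3x³ + 4y³ + 5z³ = 0` yields a cubic polynomial in `T` whose Galois group over
`ℚ` is `ℤ/3ℤ`; in particular the intersection points of the Selmer curve with this
line are defined over a cubic Galois extension of `ℚ`. -/
theorem selmer_line_cubic_galois_group :
    let q : Polynomial ℚ :=
      C (3 * 172 ^ 3) * X ^ 3 - C 4 * (C 711 * X + C 785) ^ 3 + C (5 * 172 ^ 3)
    IsCyclic q.Gal ∧ Nat.card q.Gal = 3 := by
  intro q
  have hqdef : q = C (3 * 172 ^ 3) * X ^ 3 - C 4 * (C 711 * X + C 785) ^ 3 + C (5 * 172 ^ 3) :=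
    rfl
  have hdeg : q.natDegree = 3 := by rw [hqdef]; compute_degree!
  have hne : q ≠ 0 := fun h => by simp [h] at hdeg
  -- no rational roots
  have hroots : q.roots = 0 := by
    rw [Multiset.eq_zero_iff_forall_notMem]
    intro x hx
    rw [mem_roots hne] at hx
    have hev : 3 * 172 ^ 3 * x ^ 3 - 4 * (711 * x + 785) ^ 3 + 5 * 172 ^ 3 = 0 := by
      have h2 := hx
      rw [hqdef] at h2
      simp only [IsRoot, eval_add, eval_sub, eval_mul, eval_pow, eval_C, eval_X] at h2
      exact h2
    have hden0 : ((x.den : ℚ)) ≠ 0 := Nat.cast_ne_zero.mpr x.den_nz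
    have hxnd : (x.num : ℚ) = x * x.den := (div_eq_iff hden0).mp (Rat.num_div_den x)
    have hZ : (3 * 172 ^ 3 * x.num ^ 3 - 4 * (711 * x.num + 785 * (x.den : ℤ)) ^ 3
        + 5 * 172 ^ 3 * (x.den : ℤ) ^ 3 : ℤ) = 0 := by
      have hq : ((3 * 172 ^ 3 * x.num ^ 3 - 4 * (711 * x.num + 785 * (x.den : ℤ)) ^ 3
          + 5 * 172 ^ 3 * (x.den : ℤ) ^ 3 : ℤ) : ℚ) = 0 := by
        push_cast
        rw [hxnd]
        linear_combination ((x.den : ℚ)) ^ 3 * hev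
      exact_mod_cast hq
    have key : ∀ a b : ZMod 7,
        3 * 172 ^ 3 * a ^ 3 - 4 * (711 * a + 785 * b) ^ 3 + 5 * 172 ^ 3 * b ^ 3 = 0 →
        a = 0 ∧ b = 0 := by decide
    have h7 : 3 * 172 ^ 3 * (x.num : ZMod 7) ^ 3
        - 4 * (711 * (x.num : ZMod 7) + 785 * (x.den : ZMod 7)) ^ 3
        + 5 * 172 ^ 3 * (x.den : ZMod 7) ^ 3 = 0 := by
      have h8 := congrArg (fun z : ℤ => (z : ZMod 7)) hZ
      push_cast at h8
      linear_combination h8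
    obtain ⟨ha, hb⟩ := key _ _ h7
    have h7n : (7 : ℕ) ∣ x.num.natAbs := by
      have := (ZMod.intCast_zmod_eq_zero_iff_dvd x.num 7).mp ha
      simpa using Int.natAbs_dvd_natAbs.mpr this
    have h7d : (7 : ℕ) ∣ x.den := (ZMod.natCast_eq_zero_iff x.den 7).mp hb
    have h71 : (7 : ℕ) ∣ 1 := x.reduced ▸ Nat.dvd_gcd h7n h7d
    norm_num at h71
  have hirr : Irreducible q :=
    (irreducible_iff_roots_eq_zero_of_degree_le_three (by rw [hdeg]; norm_num) (by rw [hdeg])).mpr hroots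
  have hsep : q.Separable := hirr.separable
  have hsplits := SplittingField.splits q
  set K := q.SplittingField with hK
  obtain ⟨α, hα0⟩ : ∃ α : K, eval α (q.map (algebraMap ℚ K)) = 0 := hsplits.exists_eval_eq_zero
    (degree_ne_of_natDegree_ne (by rw [natDegree_map, hdeg]; norm_num))
  rw [eval_map, ← aeval_def] at hα0
  have expand : ∀ y : K, aeval y q
      = 3 * 172 ^ 3 * y ^ 3 - 4 * (711 * y + 785) ^ 3 + 5 * 172 ^ 3 := by
    intro y
    show aeval y (C (3 * 172 ^ 3) * X ^ 3 - C 4 * (C 711 * X + C 785) ^ 3 + C (5 * 172 ^ 3)) = _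
    simp only [map_sub, map_add, map_mul, map_pow, aeval_C, aeval_X, map_ofNat]
    try ring
  have hαe : 3 * 172 ^ 3 * α ^ 3 - 4 * (711 * α + 785) ^ 3 + 5 * 172 ^ 3 = 0 := by
    rw [← expand α]; exact hα0
  have hβroot : aeval ((35994981957/948290920 : K) + (615209593633/8060472820 : K) * α + (24649/680 : K) * α ^ 2) q = 0 := by
    rw [expand]
    linear_combination (norm := ring)
      ((27173501543499749460681851/611493854889023552000 : K) + (84420669535164676802953587/611493854889023552000 : K) * α + (210821263926607035309/1490865052787200 : K) * α ^ 2 + (14976071831449/314432000 : K) * α ^ 3) * hαe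
  have hγroot : aeval ((-39169653837/948290920 : K) + (-623270066453/8060472820 : K) * α + (-24649/680 : K) * α ^ 2) q = 0 := by
    rw [expand]
    linear_combination (norm := ring)
      ((-29568862891961954188056691/611493854889023552000 : K) + (-1517388529615173699141241779/10395395533113400384000 : K) * α + (-216698056653992111493/1490865052787200 : K) * α ^ 2 + (-14976071831449/314432000 : K) * α ^ 3) * hαe
  -- minimal polynomial of α
  have hint : IsIntegral ℚ α := IsAlgebraic.isIntegral ⟨q, hne, hα0⟩
  have hminpoly := minpoly.eq_of_irreducible hirr hα0
  have hmindeg : (minpoly ℚ α).natDegree = 3 := by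
    rw [← hminpoly, natDegree_mul_leadingCoeff_inv _ hne, hdeg]
  -- distinctness
  have hαβ : α ≠ ((35994981957/948290920 : K) + (615209593633/8060472820 : K) * α + (24649/680 : K) * α ^ 2) := by
    intro h
    refine no_quad hmindeg (a := 35994981957/948290920) (b := 607149120813/8060472820)
      (c := 24649/680) (by norm_num) ?_
    simp only [map_add, map_mul, map_pow, aeval_C, aeval_X, map_div₀, map_ofNat]
    linear_combination (norm := ring) -h
  have hαγ : α ≠ ((-39169653837/948290920 : K) + (-623270066453/8060472820 : K) * α + (-24649/680 : K) * α ^ 2) := by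
    intro h
    refine no_quad hmindeg (a := -39169653837/948290920) (b := -631330539273/8060472820)
      (c := -24649/680) (by norm_num) ?_
    simp only [map_add, map_mul, map_pow, aeval_C, aeval_X, map_div₀, map_ofNat, map_neg]
    linear_combination (norm := ring) -h
  have hβγ : ((35994981957/948290920 : K) + (615209593633/8060472820 : K) * α + (24649/680 : K) * α ^ 2) ≠ ((-39169653837/948290920 : K) + (-623270066453/8060472820 : K) * α + (-24649/680 : K) * α ^ 2) := by
    intro h
    refine no_quad hmindeg (a := 37582317897/474145460) (b := 619239830043/4030236410)
      (c := 24649/340) (by norm_num) ?_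
    simp only [map_add, map_mul, map_pow, aeval_C, aeval_X, map_div₀, map_ofNat]
    linear_combination (norm := ring) h
  -- the three roots are all the roots
  have hmapne : q.map (algebraMap ℚ K) ≠ 0 := Polynomial.map_ne_zero hne
  have hmem : ∀ y : K, aeval y q = 0 → y ∈ (q.map (algebraMap ℚ K)).roots := by
    intro y hy
    rw [mem_roots hmapne, IsRoot, eval_map, ← aeval_def]
    exact hy
  have hcardroots : Multiset.card (q.map (algebraMap ℚ K)).roots = 3 := by
    have h1 := (splits_iff_card_roots (f := q.map (algebraMap ℚ K))).mp
      hsplits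
    rwa [natDegree_map, hdeg] at h1
  have hnodup : (q.map (algebraMap ℚ K)).roots.Nodup := Polynomial.nodup_roots (Separable.map hsep)
  have hsub : ({α, ((35994981957/948290920 : K) + (615209593633/8060472820 : K) * α + (24649/680 : K) * α ^ 2), ((-39169653837/948290920 : K) + (-623270066453/8060472820 : K) * α + (-24649/680 : K) * α ^ 2)} : Multiset K) ≤ (q.map (algebraMap ℚ K)).roots := by
    rw [Multiset.le_iff_subset (by simp [Multiset.insert_eq_cons, hαβ, hαγ, hβγ])]
    intro y hy
    simp only [Multiset.insert_eq_cons, Multiset.mem_cons, Multiset.mem_singleton] at hy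
    rcases hy with rfl | rfl | rfl
    · exact hmem _ hα0
    · exact hmem _ hβroot
    · exact hmem _ hγroot
  have heq : ({α, ((35994981957/948290920 : K) + (615209593633/8060472820 : K) * α + (24649/680 : K) * α ^ 2), ((-39169653837/948290920 : K) + (-623270066453/8060472820 : K) * α + (-24649/680 : K) * α ^ 2)} : Multiset K) = (q.map (algebraMap ℚ K)).roots :=
    Multiset.eq_of_le_of_card_le hsub (by rw [hcardroots]; simp)
  -- the splitting field is generated by α
  have hαmem : α ∈ IntermediateField.adjoin ℚ {α} :=
    IntermediateField.mem_adjoin_simple_self ℚ α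
  have hadjoin : IntermediateField.adjoin ℚ ({α} : Set K) = ⊤ := by
    rw [eq_top_iff]
    intro z _
    have hz : z ∈ Algebra.adjoin ℚ (q.rootSet K) := by
      rw [show Algebra.adjoin ℚ (q.rootSet K) = ⊤ from Polynomial.SplittingField.adjoin_rootSet q]
      trivial
    refine Algebra.adjoin_le ?_ hz
    intro y hy
    rw [Polynomial.mem_rootSet] at hy
    have hy2 := hmem y hy.2
    rw [← heq] at hy2
    simp only [Multiset.insert_eq_cons, Multiset.mem_cons, Multiset.mem_singleton] at hy2
    simp only [SetLike.mem_coe, IntermediateField.mem_toSubalgebra]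
    have hconst : ∀ r : ℚ, ((r : ℚ) : K) ∈ IntermediateField.adjoin ℚ ({α} : Set K) := by
      intro r
      have := IntermediateField.algebraMap_mem (IntermediateField.adjoin ℚ ({α} : Set K)) r
      rwa [eq_ratCast (algebraMap ℚ K)] at this
    rcases hy2 with rfl | rfl | rfl
    · exact hαmem
    · refine add_mem (add_mem ?_ (mul_mem ?_ hαmem)) (mul_mem ?_ (pow_mem hαmem 2)) <;>
      · first
        | (have h1 := hconst (35994981957/948290920); push_cast at h1; exact h1)
        | (have h1 := hconst (615209593633/8060472820); push_cast at h1; exact h1)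
        | (have h1 := hconst (24649/680); push_cast at h1; exact h1)
    · refine add_mem (add_mem ?_ (mul_mem ?_ hαmem)) (mul_mem ?_ (pow_mem hαmem 2)) <;>
      · first
        | (have h1 := hconst (-39169653837/948290920); push_cast at h1; exact h1)
        | (have h1 := hconst (-623270066453/8060472820); push_cast at h1; exact h1)
        | (have h1 := hconst (-24649/680); push_cast at h1; exact h1)
  have hrank : Module.finrank ℚ K = 3 := by
    have h2 := IntermediateField.adjoin.finrank hint
    rw [hmindeg] at h2
    rw [hadjoin, IntermediateField.finrank_top'] at h2
    exact h2
  have hcard : Nat.card q.Gal = 3 := by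
    rw [Polynomial.Gal.card_of_separable hsep]
    exact hrank
  haveI : Fact (Nat.Prime 3) := ⟨by norm_num⟩
  exact ⟨isCyclic_of_prime_card hcard, hcard⟩
end

section
/- Let C be a smooth plane cubic over a number field k with Jacobian J such that J(k) is finite of order not divisible by 3. If C has a k-cubic point, then there exist a Galois ℤ/3ℤ-extension l/k and three collinear points on C defined over l and permuted by Gal(l/k); consequently Y has a k-rational point. -/
set_option maxHeartbeats 1000000


/-- Let `C` be a smooth plane cubic over a number field `k` with Jacobian `J`, such that
`J(k)` is finite of order not divisible by `3`.  Here `Pts = C(k̄)` carries its Galois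
action; it is a torsor under `J(k̄)` (denoted `Jbar`, with Galois acting compatibly),
`col` is the collinearity relation ("the divisor `(P)+(Q)+(R)` is linearly equivalent to
a line section"), which under the torsor structure satisfies: for collinear `(P',Q',R')`,
a triple `(P,Q,R)` is collinear iff `(P -ᵥ P') + (Q -ᵥ Q') + (R -ᵥ R') = 0`; and `J(k)`
is the group of Galois-fixed elements of `Jbar`.  `Yk` is the set of `k`-points of the
desingularized quotient `Y` of `C×C` by `ρ`, characterized (as proved in the paper) by
the existence of a collinear Galois-permuted triple over a `ℤ/3ℤ`-extension.  If `C` has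
a `k`-cubic point, then there exist a Galois `ℤ/3ℤ`-extension `l/k` and three collinear
points on `C` defined over `l` and permuted by `Gal(l/k)`; consequently `Y` has a
`k`-rational point. -/
theorem cubic_point_gives_Y_point
    (k : Type*) [Field k] [NumberField k]
    (Jbar : Type*) [AddCommGroup Jbar] (Pts : Type*) [Nonempty Pts]
    [AddTorsor Jbar Pts]
    [DistribMulAction (AlgebraicClosure k ≃ₐ[k] AlgebraicClosure k) Jbar]
    [MulAction (AlgebraicClosure k ≃ₐ[k] AlgebraicClosure k) Pts]
    (hcompat : ∀ (σ : AlgebraicClosure k ≃ₐ[k] AlgebraicClosure k) (g : Jbar) (P : Pts),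
      σ • (g +ᵥ P) = (σ • g) +ᵥ (σ • P))
    (col : Pts → Pts → Pts → Prop)
    (hcol_ex : ∃ P Q R : Pts, col P Q R)
    (hcol_t : ∀ P Q R P' Q' R' : Pts, col P' Q' R' →
      (col P Q R ↔ (P -ᵥ P') + (Q -ᵥ Q') + (R -ᵥ R') = (0 : Jbar)))
    (hequiv : ∀ (σ : AlgebraicClosure k ≃ₐ[k] AlgebraicClosure k) (P Q R : Pts),
      col P Q R → col (σ • P) (σ • Q) (σ • R))
    -- `J(k)` is finite of order not divisible by `3`:
    (hfin : Finite {g : Jbar //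
      ∀ σ : AlgebraicClosure k ≃ₐ[k] AlgebraicClosure k, σ • g = g})
    (h3 : ¬ (3 ∣ Nat.card {g : Jbar //
      ∀ σ : AlgebraicClosure k ≃ₐ[k] AlgebraicClosure k, σ • g = g}))
    -- `C` has a `k`-cubic point:
    (hcubic : ∃ (P : Pts) (l : IntermediateField k (AlgebraicClosure k)),
      IsGalois k l ∧ Nat.card (l ≃ₐ[k] l) = 3 ∧
        ∀ σ : AlgebraicClosure k ≃ₐ[k] AlgebraicClosure k,
          (∀ x : l, σ x = x) → σ • P = P)
    (Yk : Type*)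
    (hY : Nonempty Yk ↔
      ∃ l : IntermediateField k (AlgebraicClosure k),
        IsGalois k l ∧ Nat.card (l ≃ₐ[k] l) = 3 ∧
        ∃ P Q R : Pts, col P Q R ∧
          (∀ σ : AlgebraicClosure k ≃ₐ[k] AlgebraicClosure k,
            (∀ x : l, σ x = x) → σ • P = P ∧ σ • Q = Q ∧ σ • R = R) ∧
          (∀ σ : AlgebraicClosure k ≃ₐ[k] AlgebraicClosure k,
            (σ • P, σ • Q, σ • R) ∈
              ({(P, Q, R), (Q, R, P), (R, P, Q)} : Set (Pts × Pts × Pts)))) :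
    (∃ l : IntermediateField k (AlgebraicClosure k),
        IsGalois k l ∧ Nat.card (l ≃ₐ[k] l) = 3 ∧
        ∃ P Q R : Pts, col P Q R ∧
          (∀ σ : AlgebraicClosure k ≃ₐ[k] AlgebraicClosure k,
            (∀ x : l, σ x = x) → σ • P = P ∧ σ • Q = Q ∧ σ • R = R) ∧
          (∀ σ : AlgebraicClosure k ≃ₐ[k] AlgebraicClosure k,
            (σ • P, σ • Q, σ • R) ∈
              ({(P, Q, R), (Q, R, P), (R, P, Q)} : Set (Pts × Pts × Pts)))) ∧
      Nonempty Yk := by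
  classical
  obtain ⟨P, l, hgal, hcard, hP⟩ := hcubic
  obtain ⟨X0, Y0, Z0, hcol0⟩ := hcol_ex
  haveI := hgal
  -- the restriction homomorphism to Gal(l/k)
  let r : (AlgebraicClosure k ≃ₐ[k] AlgebraicClosure k) →* (↥l ≃ₐ[k] ↥l) :=
    AlgEquiv.restrictNormalHom ↥l
  have hrx : ∀ (τ : AlgebraicClosure k ≃ₐ[k] AlgebraicClosure k) (x : l),
      τ (x : AlgebraicClosure k) = ((r τ x : l) : AlgebraicClosure k) :=
    fun τ x => (AlgEquiv.restrictNormalHom_apply l τ x).symm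
  have hfixl : ∀ τ : AlgebraicClosure k ≃ₐ[k] AlgebraicClosure k, r τ = 1 →
      ∀ x : l, τ (x : AlgebraicClosure k) = x := by
    intro τ h x
    rw [hrx τ x, h]
    rfl
  have hconj : ∀ τ π : AlgebraicClosure k ≃ₐ[k] AlgebraicClosure k,
      r τ = r π → τ • P = π • P := by
    intro τ π h
    have h1 : r (π⁻¹ * τ) = 1 := by rw [map_mul, map_inv, h, inv_mul_cancel]
    have h2 : (π⁻¹ * τ) • P = P := hP _ (hfixl _ h1)
    calc τ • P = π • (π⁻¹ • (τ • P)) := (smul_inv_smul π _).symm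
      _ = π • ((π⁻¹ * τ) • P) := by rw [mul_smul]
      _ = π • P := by rw [h2]
  -- Gal(l/k) is cyclic of order 3
  haveI : Fact (Nat.Prime 3) := ⟨by norm_num⟩
  haveI : IsCyclic (↥l ≃ₐ[k] ↥l) := isCyclic_of_prime_card hcard
  obtain ⟨s, hs⟩ := IsCyclic.exists_generator (α := ↥l ≃ₐ[k] ↥l)
  have hs3 : s * s * s = 1 := by
    have h := pow_card_eq_one' (x := s)
    rw [hcard, pow_succ, pow_succ, pow_one] at h
    exact h
  have hclass : ∀ g : (↥l ≃ₐ[k] ↥l), g = 1 ∨ g = s ∨ g = s * s := by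
    intro g
    obtain ⟨n, hn⟩ := Subgroup.mem_zpowers_iff.mp (hs g)
    have hz3 : s ^ (3 : ℤ) = 1 := by
      rw [show (3 : ℤ) = ((3 : ℕ) : ℤ) by norm_num, zpow_natCast]
      rw [show (3 : ℕ) = 2 + 1 by norm_num, pow_succ, pow_two]
      exact hs3
    have key : s ^ n = s ^ (n % 3) := by
      conv_lhs => rw [← Int.mul_ediv_add_emod n 3]
      rw [zpow_add, zpow_mul, hz3, one_zpow, one_mul]
    have h0 : (0 : ℤ) ≤ n % 3 := Int.emod_nonneg n (by norm_num)
    have h2' : n % 3 < 3 := Int.emod_lt_of_pos n (by norm_num)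
    have : n % 3 = 0 ∨ n % 3 = 1 ∨ n % 3 = 2 := by omega
    rcases this with h | h | h
    · left; rw [← hn, key, h, zpow_zero]
    · right; left; rw [← hn, key, h, zpow_one]
    · right; right; rw [← hn, key, h, show (2 : ℤ) = 1 + 1 by norm_num, zpow_add, zpow_one]
  -- a lift σ of the generator s
  obtain ⟨σ, hσ⟩ := AlgEquiv.restrictNormalHom_surjective (AlgebraicClosure k)
    (F := k) (K₁ := ↥l) s
  have hσ : r σ = s := hσ
  -- action of any τ on the conjugate triple (P, σ•P, (σ*σ)•P)
  have hfix_acts : ∀ τ : AlgebraicClosure k ≃ₐ[k] AlgebraicClosure k, r τ = 1 →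
      τ • P = P ∧ τ • (σ • P) = σ • P ∧ τ • ((σ * σ) • P) = (σ * σ) • P := by
    intro τ h
    refine ⟨?_, ?_, ?_⟩
    · have := hconj τ 1 (by rw [map_one, h])
      rwa [one_smul] at this
    · rw [← mul_smul]
      exact hconj (τ * σ) σ (by rw [map_mul, h, one_mul])
    · rw [← mul_smul]
      exact hconj (τ * (σ * σ)) (σ * σ) (by rw [map_mul, h, one_mul])
  have hs_acts : ∀ τ : AlgebraicClosure k ≃ₐ[k] AlgebraicClosure k, r τ = s →
      τ • P = σ • P ∧ τ • (σ • P) = (σ * σ) • P ∧ τ • ((σ * σ) • P) = P := by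
    intro τ h
    refine ⟨hconj τ σ (by rw [h, hσ]), ?_, ?_⟩
    · rw [← mul_smul]
      exact hconj (τ * σ) (σ * σ) (by rw [map_mul, map_mul, h, hσ])
    · rw [← mul_smul]
      have := hconj (τ * (σ * σ)) 1
        (by rw [map_mul, map_mul, map_one, h, hσ, ← mul_assoc, hs3])
      rwa [one_smul] at this
  have hss_acts : ∀ τ : AlgebraicClosure k ≃ₐ[k] AlgebraicClosure k, r τ = s * s →
      τ • P = (σ * σ) • P ∧ τ • (σ • P) = P ∧ τ • ((σ * σ) • P) = σ • P := by
    intro τ h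
    refine ⟨hconj τ (σ * σ) (by rw [map_mul, h, hσ]), ?_, ?_⟩
    · rw [← mul_smul]
      have := hconj (τ * σ) 1 (by rw [map_mul, map_one, h, hσ, hs3])
      rwa [one_smul] at this
    · rw [← mul_smul]
      exact hconj (τ * (σ * σ)) σ
        (by rw [map_mul, map_mul, h, hσ, ← mul_assoc, hs3, one_mul])
  have hcyc : ∀ τ : AlgebraicClosure k ≃ₐ[k] AlgebraicClosure k,
      (τ • P = P ∧ τ • (σ • P) = σ • P ∧ τ • ((σ * σ) • P) = (σ * σ) • P) ∨
      (τ • P = σ • P ∧ τ • (σ • P) = (σ * σ) • P ∧ τ • ((σ * σ) • P) = P) ∨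
      (τ • P = (σ * σ) • P ∧ τ • (σ • P) = P ∧ τ • ((σ * σ) • P) = σ • P) := by
    intro τ
    rcases hclass (r τ) with h | h | h
    · exact Or.inl (hfix_acts τ h)
    · exact Or.inr (Or.inl (hs_acts τ h))
    · exact Or.inr (Or.inr (hss_acts τ h))
  -- torsor / group computations
  have hvsub : ∀ (τ : AlgebraicClosure k ≃ₐ[k] AlgebraicClosure k) (A B : Pts),
      τ • (A -ᵥ B) = τ • A -ᵥ τ • B := by
    intro τ A B
    have h1 : τ • A = τ • (A -ᵥ B) +ᵥ τ • B := by rw [← hcompat, vsub_vadd]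
    rw [h1, vadd_vsub]
  have hφ : ∀ A B : Pts, A -ᵥ B = (A -ᵥ P) - (B -ᵥ P) :=
    fun A B => (vsub_sub_vsub_cancel_right A B P).symm
  have hbase : ∀ A B C X Y Z X' Y' Z' : Pts, col X Y Z → col X' Y' Z' →
      (A -ᵥ X) + (B -ᵥ Y) + (C -ᵥ Z) = (A -ᵥ X') + (B -ᵥ Y') + (C -ᵥ Z') := by
    intro A B C X Y Z X' Y' Z' h h'
    have h0 : (X' -ᵥ X) + (Y' -ᵥ Y) + (Z' -ᵥ Z) = 0 := (hcol_t X' Y' Z' X Y Z h).mp h'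
    have key : (A -ᵥ X) + (B -ᵥ Y) + (C -ᵥ Z) =
        ((A -ᵥ X') + (B -ᵥ Y') + (C -ᵥ Z')) + ((X' -ᵥ X) + (Y' -ᵥ Y) + (Z' -ᵥ Z)) := by
      rw [hφ A X, hφ B Y, hφ C Z, hφ A X', hφ B Y', hφ C Z', hφ X' X, hφ Y' Y, hφ Z' Z]
      abel
    rw [key, h0, add_zero]
  have habel1 : ∀ A B C X Y Z : Pts,
      (B -ᵥ X) + (C -ᵥ Y) + (A -ᵥ Z) = (A -ᵥ X) + (B -ᵥ Y) + (C -ᵥ Z) := by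
    intro A B C X Y Z
    rw [hφ B X, hφ C Y, hφ A Z, hφ A X, hφ B Y, hφ C Z]
    abel
  have habel2 : ∀ A B C X Y Z : Pts,
      (C -ᵥ X) + (A -ᵥ Y) + (B -ᵥ Z) = (A -ᵥ X) + (B -ᵥ Y) + (C -ᵥ Z) := by
    intro A B C X Y Z
    rw [hφ C X, hφ A Y, hφ B Z, hφ A X, hφ B Y, hφ C Z]
    abel
  -- the class d of the conjugate triple is k-rational
  set d : Jbar := (P -ᵥ X0) + (σ • P -ᵥ Y0) + ((σ * σ) • P -ᵥ Z0) with hd_def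
  have hdS : ∀ τ : AlgebraicClosure k ≃ₐ[k] AlgebraicClosure k, τ • d = d := by
    intro τ
    have e1 : τ • d = (τ • P -ᵥ τ • X0) + (τ • (σ • P) -ᵥ τ • Y0) +
        (τ • ((σ * σ) • P) -ᵥ τ • Z0) := by
      rw [hd_def, smul_add, smul_add, hvsub, hvsub, hvsub]
    have e2 : (τ • P -ᵥ τ • X0) + (τ • (σ • P) -ᵥ τ • Y0) + (τ • ((σ * σ) • P) -ᵥ τ • Z0)
        = (τ • P -ᵥ X0) + (τ • (σ • P) -ᵥ Y0) + (τ • ((σ * σ) • P) -ᵥ Z0) :=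
      hbase _ _ _ _ _ _ _ _ _ (hequiv τ X0 Y0 Z0 hcol0) hcol0
    rw [e1, e2]
    rcases hcyc τ with ⟨h1, h2, h3⟩ | ⟨h1, h2, h3⟩ | ⟨h1, h2, h3⟩ <;> rw [h1, h2, h3, hd_def]
    · exact habel1 P (σ • P) ((σ * σ) • P) X0 Y0 Z0
    · exact habel2 P (σ • P) ((σ * σ) • P) X0 Y0 Z0
  -- J(k) as a subgroup
  let S : AddSubgroup Jbar :=
    { carrier := {g | ∀ τ : AlgebraicClosure k ≃ₐ[k] AlgebraicClosure k, τ • g = g}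
      add_mem' := fun ha hb τ => by rw [smul_add, ha τ, hb τ]
      zero_mem' := fun τ => smul_zero τ
      neg_mem' := fun ha τ => by rw [smul_neg, ha τ] }
  have hScard : Nat.card S = Nat.card {g : Jbar //
      ∀ σ : AlgebraicClosure k ≃ₐ[k] AlgebraicClosure k, σ • g = g} :=
    Nat.card_congr (Equiv.subtypeEquivRight fun g => Iff.rfl)
  have h3' : ¬ (3 ∣ Nat.card S) := by rw [hScard]; exact h3
  have hdm : (Nat.card S) • d = 0 := by
    have h : (Nat.card S) • (⟨d, hdS⟩ : S) = 0 := card_nsmul_eq_zero'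
    have h2 := congrArg (Subtype.val) h
    push_cast at h2
    exact h2
  -- divide d by 3 in J(k)
  set m : ℕ := Nat.card S with hm_def
  have hcop : Nat.Coprime 3 m := (Nat.Prime.coprime_iff_not_dvd (by norm_num)).mpr h3'
  have hbez : (1 : ℤ) = 3 * Int.gcdA 3 m + m * Int.gcdB 3 m := by
    have h := Int.gcd_eq_gcd_ab (3 : ℤ) (m : ℤ)
    rw [show ((3:ℤ)) = ((3:ℕ) : ℤ) by norm_num] at h
    rw [Int.gcd_natCast_natCast] at h
    rw [hcop] at h
    exact_mod_cast h
  set e : Jbar := Int.gcdA 3 (m : ℕ) • d with he_def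
  have heS : ∀ τ : AlgebraicClosure k ≃ₐ[k] AlgebraicClosure k, τ • e = e := by
    intro τ
    have h := map_zsmul (DistribMulAction.toAddMonoidHom Jbar τ) (Int.gcdA 3 m) d
    have h2 : τ • e = Int.gcdA 3 m • (τ • d) := h
    rw [h2, hdS τ]
  have h3e : e + e + e = d := by
    have h1 : ((3 : ℤ) * Int.gcdA 3 m) • d = d := by
      have hm1 : (3 : ℤ) * Int.gcdA 3 m = 1 - (m : ℤ) * Int.gcdB 3 m := by linarith [hbez]
      rw [hm1, sub_smul, one_smul, mul_comm ((m : ℤ)), mul_smul, natCast_zsmul, hdm,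
        smul_zero, sub_zero]
    calc e + e + e = (3 : ℤ) • e := by
          rw [show (3 : ℤ) = 1 + 1 + 1 by norm_num, add_smul, add_smul, one_smul]
      _ = ((3 : ℤ) * Int.gcdA 3 m) • d := by rw [he_def, mul_smul]
      _ = d := h1
  -- the translated triple
  have hQ : ∀ (τ : AlgebraicClosure k ≃ₐ[k] AlgebraicClosure k) (A : Pts),
      τ • ((-e) +ᵥ A) = (-e) +ᵥ (τ • A) := by
    intro τ A
    rw [hcompat, smul_neg, heS τ]
  have hcolQ : col ((-e) +ᵥ P) ((-e) +ᵥ σ • P) ((-e) +ᵥ (σ * σ) • P) := by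
    rw [hcol_t _ _ _ X0 Y0 Z0 hcol0, vadd_vsub_assoc, vadd_vsub_assoc, vadd_vsub_assoc]
    have key : (-e + (P -ᵥ X0)) + (-e + (σ • P -ᵥ Y0)) + (-e + ((σ * σ) • P -ᵥ Z0))
        = ((P -ᵥ X0) + (σ • P -ᵥ Y0) + ((σ * σ) • P -ᵥ Z0)) - (e + e + e) := by abel
    rw [key, ← hd_def, h3e, sub_self]
  -- assemble the statement
  have main : ∃ l : IntermediateField k (AlgebraicClosure k),
      IsGalois k l ∧ Nat.card (l ≃ₐ[k] l) = 3 ∧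
      ∃ Pp Qq Rr : Pts, col Pp Qq Rr ∧
        (∀ σ' : AlgebraicClosure k ≃ₐ[k] AlgebraicClosure k,
          (∀ x : l, σ' x = x) → σ' • Pp = Pp ∧ σ' • Qq = Qq ∧ σ' • Rr = Rr) ∧
        (∀ σ' : AlgebraicClosure k ≃ₐ[k] AlgebraicClosure k,
          (σ' • Pp, σ' • Qq, σ' • Rr) ∈
            ({(Pp, Qq, Rr), (Qq, Rr, Pp), (Rr, Pp, Qq)} : Set (Pts × Pts × Pts))) := by
    refine ⟨l, hgal, hcard, (-e) +ᵥ P, (-e) +ᵥ σ • P, (-e) +ᵥ (σ * σ) • P, hcolQ, ?_, ?_⟩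
    · intro τ hτ
      have hr1 : r τ = 1 := by
        apply AlgEquiv.ext
        intro x
        rw [AlgEquiv.one_apply]
        exact Subtype.coe_injective ((hrx τ x).symm.trans (hτ x))
      obtain ⟨h1, h2, h3''⟩ := hfix_acts τ hr1
      exact ⟨by rw [hQ, h1], by rw [hQ, h2], by rw [hQ, h3'']⟩
    · intro τ
      simp only [Set.mem_insert_iff, Set.mem_singleton_iff]
      rcases hcyc τ with ⟨h1, h2, h3''⟩ | ⟨h1, h2, h3''⟩ | ⟨h1, h2, h3''⟩
      · left; rw [hQ, hQ, hQ, h1, h2, h3'']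
      · right; left; rw [hQ, hQ, hQ, h1, h2, h3'']
      · right; right; rw [hQ, hQ, hQ, h1, h2, h3'']
  exact ⟨main, hY.mpr main⟩
end

section
/- For the elliptic curve y² = x³ + Ax + B, the slopes dy/dx at the eight inflection points other than the point at infinity are exactly the roots of F(u) = u⁸ + 18Au⁴ + 108Bu² − 27A², and if α is a root of F then the corresponding inflection point is (x,y) = (α²/3, (α⁴+3A)/(6α)). -/
/-- Auxiliary: the three verifications for a nonzero root `α` of `F`. -/
theorem aux_point (k : Type*) [Field k] (h2 : (2 : k) ≠ 0) (h3 : (3 : k) ≠ 0)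
    (A B : k) (hΔ : 4 * A ^ 3 + 27 * B ^ 2 ≠ 0)
    (α : k) (h : α ^ 8 + 18 * A * α ^ 4 + 108 * B * α ^ 2 - 27 * A ^ 2 = 0) (hα : α ≠ 0) :
    ((α ^ 4 + 3 * A) / (6 * α)) ^ 2 =
        (α ^ 2 / 3) ^ 3 + A * (α ^ 2 / 3) + B ∧
      3 * (α ^ 2 / 3) ^ 4 + 6 * A * (α ^ 2 / 3) ^ 2 + 12 * B * (α ^ 2 / 3) - A ^ 2 = 0 ∧
      (3 * (α ^ 2 / 3) ^ 2 + A) / (2 * ((α ^ 4 + 3 * A) / (6 * α))) = α := by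
  have h6 : (6 : k) ≠ 0 := by
    have := mul_ne_zero h2 h3; norm_num at this; exact this
  have h36 : (36 : k) ≠ 0 := by
    have := mul_ne_zero (mul_ne_zero h2 h2) (mul_ne_zero h3 h3)
    norm_num at this; exact this
  have hnum : α ^ 4 + 3 * A ≠ 0 := by
    intro hc
    have hB' : (36 : k) * (3 * B * α ^ 2) = 36 * (2 * A ^ 2) := by
      linear_combination h - (α ^ 4 + 15 * A) * hc
    have hB : 3 * B * α ^ 2 = 2 * A ^ 2 := mul_left_cancel₀ h36 hB'
    have hAz : A * (4 * A ^ 3 + 27 * B ^ 2) = 0 := by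
      linear_combination (-(3 * B * α ^ 2 + 2 * A ^ 2)) * hB + 9 * B ^ 2 * hc
    have hA : A = 0 := by
      rcases mul_eq_zero.mp hAz with h' | h'
      · exact h'
      · exact absurd h' hΔ
    apply hα
    rw [hA] at hc
    have h4 : α ^ 4 = 0 := by linear_combination hc
    exact pow_eq_zero_iff (n := 4) (by norm_num) |>.mp h4
  refine ⟨?_, ?_, ?_⟩
  · field_simp
    ring_nf
    linear_combination (-9 : k) * h
  · field_simp
    ring_nf
    linear_combination (1 : k) * h
  · have hy : (α ^ 4 + 3 * A) / (6 * α) ≠ 0 :=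
      div_ne_zero hnum (mul_ne_zero h6 hα)
    field_simp
    ring

/-- For the elliptic curve `y² = x³ + Ax + B` over an algebraically closed field of
characteristic `≠ 2, 3` (with `4A³ + 27B² ≠ 0`), the slopes `dy/dx = (3x₀² + A)/(2y₀)`
at the eight inflection points other than the point at infinity (i.e. the nontrivial
`3`-torsion points, those affine points with `y₀ ≠ 0` at which the `3`-division
polynomial `ψ₃(x) = 3x⁴ + 6Ax² + 12Bx − A²` vanishes) are exactly the roots of
`F(u) = u⁸ + 18Au⁴ + 108Bu² − 27A²`, and if `α` is a root of `F` (with `α ≠ 0`) then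
the corresponding inflection point is `(x, y) = (α²/3, (α⁴ + 3A)/(6α))`. -/
theorem inflection_slopes_roots_of_F
    (k : Type*) [Field k] [IsAlgClosed k] (h2 : (2 : k) ≠ 0) (h3 : (3 : k) ≠ 0)
    (A B : k) (hΔ : 4 * A ^ 3 + 27 * B ^ 2 ≠ 0) :
    ({u : k | u ^ 8 + 18 * A * u ^ 4 + 108 * B * u ^ 2 - 27 * A ^ 2 = 0} =
      {u : k | ∃ x₀ y₀ : k, y₀ ^ 2 = x₀ ^ 3 + A * x₀ + B ∧ y₀ ≠ 0 ∧
        3 * x₀ ^ 4 + 6 * A * x₀ ^ 2 + 12 * B * x₀ - A ^ 2 = 0 ∧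
        u = (3 * x₀ ^ 2 + A) / (2 * y₀)}) ∧
    ∀ α : k, α ^ 8 + 18 * A * α ^ 4 + 108 * B * α ^ 2 - 27 * A ^ 2 = 0 → α ≠ 0 →
      ((α ^ 4 + 3 * A) / (6 * α)) ^ 2 =
          (α ^ 2 / 3) ^ 3 + A * (α ^ 2 / 3) + B ∧
        3 * (α ^ 2 / 3) ^ 4 + 6 * A * (α ^ 2 / 3) ^ 2 + 12 * B * (α ^ 2 / 3) - A ^ 2 = 0 ∧
        (3 * (α ^ 2 / 3) ^ 2 + A) / (2 * ((α ^ 4 + 3 * A) / (6 * α))) = α := by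
  have h6 : (6 : k) ≠ 0 := by
    have := mul_ne_zero h2 h3; norm_num at this; exact this
  have h36 : (36 : k) ≠ 0 := by
    have := mul_ne_zero (mul_ne_zero h2 h2) (mul_ne_zero h3 h3)
    norm_num at this; exact this
  have h27 : (27 : k) ≠ 0 := by
    have := mul_ne_zero (mul_ne_zero h3 h3) h3
    norm_num at this; exact this
  constructor
  · ext u
    simp only [Set.mem_setOf_eq]
    constructor
    · intro hu
      by_cases hu0 : u = 0
      · -- then A = 0 and B ≠ 0
        subst hu0
        have hA : A = 0 := by
          have hz : 27 * A ^ 2 = 0 := by linear_combination -hu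
          rcases mul_eq_zero.mp hz with h' | h'
          · exact absurd h' h27
          · exact pow_eq_zero_iff (n := 2) (by norm_num) |>.mp h'
        have hB : B ≠ 0 := by
          intro hc; apply hΔ; rw [hA, hc]; ring
        obtain ⟨y, hy⟩ := IsAlgClosed.exists_pow_nat_eq B (n := 2) (by norm_num)
        refine ⟨0, y, ?_, ?_, ?_, ?_⟩
        · rw [hy]; ring
        · intro hc; apply hB; rw [← hy, hc]; ring
        · rw [hA]; ring
        · rw [hA]; simp
      · obtain ⟨h1, hψ, hslope⟩ := aux_point k h2 h3 A B hΔ u hu hu0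
        have hnum : u ^ 4 + 3 * A ≠ 0 := by
          intro hc
          have hB' : (36 : k) * (3 * B * u ^ 2) = 36 * (2 * A ^ 2) := by
            linear_combination hu - (u ^ 4 + 15 * A) * hc
          have hB : 3 * B * u ^ 2 = 2 * A ^ 2 := mul_left_cancel₀ h36 hB'
          have hAz : A * (4 * A ^ 3 + 27 * B ^ 2) = 0 := by
            linear_combination (-(3 * B * u ^ 2 + 2 * A ^ 2)) * hB + 9 * B ^ 2 * hc
          have hA : A = 0 := by
            rcases mul_eq_zero.mp hAz with h' | h'
            · exact h'
            · exact absurd h' hΔ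
          apply hu0
          rw [hA] at hc
          have h4 : u ^ 4 = 0 := by linear_combination hc
          exact pow_eq_zero_iff (n := 4) (by norm_num) |>.mp h4
        exact ⟨u ^ 2 / 3, (u ^ 4 + 3 * A) / (6 * u), h1,
          div_ne_zero hnum (mul_ne_zero h6 hu0), hψ, hslope.symm⟩
    · rintro ⟨x₀, y₀, hE, hy, hψ, rfl⟩
      have h2y : 2 * y₀ ≠ 0 := mul_ne_zero h2 hy
      have key : (3*x₀^2+A)^8 + 18*A*(3*x₀^2+A)^4*(2*y₀)^4
          + 108*B*(3*x₀^2+A)^2*(2*y₀)^6 - 27*A^2*(2*y₀)^8 = 0 := by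
        linear_combination
          (2187*x₀^12 + 9234*x₀^10*A + 11988*x₀^9*B + 12681*x₀^8*A^2 + 30672*x₀^7*A*B
            + 6732*x₀^6*A^3 + 14256*x₀^6*B^2 + 24984*x₀^5*A^2*B + 717*x₀^4*A^4
            + 22464*x₀^4*A*B^2 + 5904*x₀^3*A^3*B + 5184*x₀^3*B^3 - 318*x₀^2*A^5
            + 8496*x₀^2*A^2*B^2 - 588*x₀*A^4*B + 3456*x₀*A*B^3 - A^6 - 288*A^3*B^2) * hψ
          + (288*A*(3*x₀^2+A)^4*(y₀^2+(x₀^3+A*x₀+B))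
            + 6912*B*(3*x₀^2+A)^2*(y₀^4+y₀^2*(x₀^3+A*x₀+B)+(x₀^3+A*x₀+B)^2)
            - 6912*A^2*(y₀^6+y₀^4*(x₀^3+A*x₀+B)+y₀^2*(x₀^3+A*x₀+B)^2+(x₀^3+A*x₀+B)^3)) * hE
      field_simp
      linear_combination key
  · intro α h hα
    exact aux_point k h2 h3 A B hΔ α h hα
end

section
/- If α satisfies α⁸ + 18Aα⁴ + 108Bα² − 27A² = 0 and α ≠ 0, then the point (α²/3, (α⁴+3A)/(6α)) lies on the curve y² = x³ + Ax + B and is a 3-torsion point of the elliptic curve (equivalently, an inflection point), i.e., 3x⁴ + 6Ax² + 12Bx − A² = 0 at x = α²/3. -/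
theorem aux_curve (k : Type*) [Field k] (h2 : (2 : k) ≠ 0) (h3 : (3 : k) ≠ 0)
    (A B : k) (α : k) (hα : α ^ 8 + 18 * A * α ^ 4 + 108 * B * α ^ 2 - 27 * A ^ 2 = 0)
    (hα0 : α ≠ 0) :
    ((α ^ 4 + 3 * A) / (6 * α)) ^ 2 = (α ^ 2 / 3) ^ 3 + A * (α ^ 2 / 3) + B := by
  have h6 : (6:k) ≠ 0 := by
    have := mul_ne_zero h2 h3
    norm_num at this ⊢; exact this
  rw [div_pow, div_eq_iff (pow_ne_zero 2 (mul_ne_zero h6 hα0))]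
  field_simp
  linear_combination -9 * hα

theorem aux_psi (k : Type*) [Field k] (A B α : k)
    (hα : α ^ 8 + 18 * A * α ^ 4 + 108 * B * α ^ 2 - 27 * A ^ 2 = 0)
    (h3 : (3:k) ≠ 0) :
    3 * (α ^ 2 / 3) ^ 4 + 6 * A * (α ^ 2 / 3) ^ 2 + 12 * B * (α ^ 2 / 3) - A ^ 2 = 0 := by
  field_simp
  linear_combination hα

/-- Let `k` be a field of characteristic `≠ 2, 3` and `A, B ∈ k` with `4A³ + 27B² ≠ 0`.
If `α` satisfies `α⁸ + 18Aα⁴ + 108Bα² − 27A² = 0` and `α ≠ 0`, then the point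
`(α²/3, (α⁴ + 3A)/(6α))` lies on the curve `y² = x³ + Ax + B` and is a `3`-torsion
point of the elliptic curve (equivalently, an inflection point), i.e. the `3`-division
polynomial `ψ₃(x) = 3x⁴ + 6Ax² + 12Bx − A²` vanishes at `x = α²/3`. -/
theorem root_of_F_gives_inflection_point
    (k : Type*) [Field k] (h2 : (2 : k) ≠ 0) (h3 : (3 : k) ≠ 0)
    (A B : k) (hΔ : 4 * A ^ 3 + 27 * B ^ 2 ≠ 0)
    (α : k) (hα : α ^ 8 + 18 * A * α ^ 4 + 108 * B * α ^ 2 - 27 * A ^ 2 = 0)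
    (hα0 : α ≠ 0) :
    let x : k := α ^ 2 / 3
    let y : k := (α ^ 4 + 3 * A) / (6 * α)
    y ^ 2 = x ^ 3 + A * x + B ∧
      3 * x ^ 4 + 6 * A * x ^ 2 + 12 * B * x - A ^ 2 = 0 := by
  exact ⟨aux_curve k h2 h3 A B α hα hα0, aux_psi k A B α hα h3⟩
end

section
/- Let F(u) = u⁸ + 18Au⁴ + 108Bu² − 27A² with root α ≠ 0, factored as F = (u²−α²)·f_α. Then the six roots of f_α, viewed as slopes of inflection points of y²=x³+Ax+B as in the correspondence u ↦ [6u² : −6u : 3A−u⁴], all lie on the conic 27t² − 6α²rt + (α⁴+18A)r² + (α⁶+21Aα²+81B)s² = 0 in the dual projective plane with coordinates [r:s:t]. -/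
/-- Let `k` be a field of characteristic `≠ 2, 3` and `A, B ∈ k` with `4A³ + 27B² ≠ 0`.
Let `F(u) = u⁸ + 18Au⁴ + 108Bu² − 27A²`, let `α ≠ 0` be a root of `F`, and factor
`F = (u² − α²)·f_α`.  Every root `β` of `f_α` (i.e. every root of `F` with `β² ≠ α²`),
viewed as the slope of an inflection point of `y² = x³ + Ax + B` under the
correspondence `u ↦ [6u² : −6u : 3A − u⁴]`, gives a point of the dual projective plane
(with coordinates `[r : s : t]`) lying on the conic
`27t² − 6α²rt + (α⁴ + 18A)r² + (α⁶ + 21Aα² + 81B)s² = 0`. -/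
theorem six_inflections_on_conic
    (k : Type*) [Field k] (h2 : (2 : k) ≠ 0) (h3 : (3 : k) ≠ 0)
    (A B : k) (hΔ : 4 * A ^ 3 + 27 * B ^ 2 ≠ 0)
    (α : k) (hα : α ^ 8 + 18 * A * α ^ 4 + 108 * B * α ^ 2 - 27 * A ^ 2 = 0)
    (hα0 : α ≠ 0)
    (β : k) (hβ : β ^ 8 + 18 * A * β ^ 4 + 108 * B * β ^ 2 - 27 * A ^ 2 = 0)
    (hβα : β ^ 2 ≠ α ^ 2) :
    let r : k := 6 * β ^ 2
    let s : k := -6 * β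
    let t : k := 3 * A - β ^ 4
    27 * t ^ 2 - 6 * α ^ 2 * r * t + (α ^ 4 + 18 * A) * r ^ 2
      + (α ^ 6 + 21 * A * α ^ 2 + 81 * B) * s ^ 2 = 0 := by
  intro r s t
  have hne : β ^ 2 - α ^ 2 ≠ 0 := sub_ne_zero.mpr hβα
  have hG : (β ^ 2 + α ^ 2) * (β ^ 4 + α ^ 4) + 18 * A * (β ^ 2 + α ^ 2) + 108 * B = 0 := by
    apply mul_left_cancel₀ hne
    ring_nf
    linear_combination hβ - hα
  show 27 * t ^ 2 - 6 * α ^ 2 * r * t + (α ^ 4 + 18 * A) * r ^ 2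
      + (α ^ 6 + 21 * A * α ^ 2 + 81 * B) * s ^ 2 = 0
  simp only [r, s, t]
  linear_combination 27 * hβ - 36 * hα + 36 * α ^ 2 * hG
end
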